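/- arXiv:math/0310406 — 10 statements merged into one kernel-verified Lean document; each statement's English description precedes it below -/
import Mathlib

section
/- If x and y are elements of an inner product space over ℝ or ℂ with ‖x - y‖ ≤ δ and ‖y‖ > δ > 0, then ‖x‖ · √(‖y‖² - δ²) ≤ Re⟨x, y⟩. -/
theorem stmt0 {𝕂 H : Type*} [RCLike 𝕂] [NormedAddCommGroup H] [InnerProductSpace 𝕂 H]
    (x y : H) (δ : ℝ) (hδ : 0 < δ) (hxy : ‖x - y‖ ≤ δ) (hy : δ < ‖y‖) :
    ‖x‖ * Real.sqrt (‖y‖ ^ 2 - δ ^ 2) ≤ RCLike.re (inner 𝕂 x y : 𝕂) := by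
  have hns : ‖x - y‖ ^ 2 = ‖x‖ ^ 2 - 2 * RCLike.re (inner 𝕂 x y : 𝕂) + ‖y‖ ^ 2 :=
    @norm_sub_sq 𝕂 H _ _ _ x y
  have hsq : ‖x - y‖ ^ 2 ≤ δ ^ 2 := by
    have := norm_nonneg (x - y)
    nlinarith
  set s := Real.sqrt (‖y‖ ^ 2 - δ ^ 2) with hs
  have hs0 : 0 ≤ s := Real.sqrt_nonneg _
  have hs2 : s ^ 2 = ‖y‖ ^ 2 - δ ^ 2 := Real.sq_sqrt (by nlinarith)
  nlinarith [sq_nonneg (‖x‖ - s)]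
end

section
/- If x and y are elements of an inner product space with ‖x - y‖ ≤ δ and ‖y‖ > δ > 0, then ‖x‖²‖y‖² − (Re⟨x, y⟩)² ≤ δ²‖x‖². -/
theorem stmt1 {𝕂 H : Type*} [RCLike 𝕂] [NormedAddCommGroup H] [InnerProductSpace 𝕂 H]
    (x y : H) (δ : ℝ) (hδ : 0 < δ) (hxy : ‖x - y‖ ≤ δ) (hy : δ < ‖y‖) :
    ‖x‖ ^ 2 * ‖y‖ ^ 2 - (RCLike.re (inner 𝕂 x y : 𝕂)) ^ 2 ≤ δ ^ 2 * ‖x‖ ^ 2 := by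
  have h2 := @norm_sub_sq 𝕂 H _ _ _ x y
  have h1 : ‖x - y‖ ^ 2 ≤ δ ^ 2 := by nlinarith [norm_nonneg (x - y)]
  have hr : (‖x‖ ^ 2 + ‖y‖ ^ 2 - δ ^ 2) / 2 ≤ RCLike.re (inner 𝕂 x y : 𝕂) := by
    nlinarith
  have hm : 0 < (‖x‖ ^ 2 + ‖y‖ ^ 2 - δ ^ 2) / 2 := by nlinarith [sq_nonneg ‖x‖]
  have hr2 : ((‖x‖ ^ 2 + ‖y‖ ^ 2 - δ ^ 2) / 2) ^ 2 ≤ RCLike.re (inner 𝕂 x y : 𝕂) ^ 2 := by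
    nlinarith
  nlinarith [sq_nonneg (‖x‖ ^ 2 - ‖y‖ ^ 2 + δ ^ 2)]
end

section
/- If x and y are elements of an inner product space with ‖x - y‖ ≤ δ and ‖y‖ > δ > 0, then ‖x‖²‖y‖² − |⟨x, y⟩|² ≤ δ²‖x‖². -/
theorem stmt2 {𝕂 H : Type*} [RCLike 𝕂] [NormedAddCommGroup H] [InnerProductSpace 𝕂 H]
    (x y : H) (δ : ℝ) (hδ : 0 < δ) (hxy : ‖x - y‖ ≤ δ) (hy : δ < ‖y‖) :
    ‖x‖ ^ 2 * ‖y‖ ^ 2 - ‖(inner 𝕂 x y : 𝕂)‖ ^ 2 ≤ δ ^ 2 * ‖x‖ ^ 2 := by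
  have h1 : ‖x - y‖ ^ 2 = ‖x‖ ^ 2 - 2 * RCLike.re (inner 𝕂 x y : 𝕂) + ‖y‖ ^ 2 :=
    @norm_sub_sq 𝕂 H _ _ _ x y
  have h2 : RCLike.re (inner 𝕂 x y : 𝕂) ≤ ‖(inner 𝕂 x y : 𝕂)‖ := RCLike.re_le_norm _
  have h3 : ‖x - y‖ ^ 2 ≤ δ ^ 2 := by nlinarith [norm_nonneg (x - y)]
  nlinarith [sq_nonneg (‖x‖ ^ 2 - ‖(inner 𝕂 x y : 𝕂)‖), sq_nonneg ‖x‖, norm_nonneg x,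
    mul_nonneg (mul_nonneg (norm_nonneg x) (norm_nonneg x))
      (sub_nonneg.mpr h2)]
end

section
/- The constant 1 in front of δ² in the inequality ‖x‖²‖y‖² − (Re⟨x, y⟩)² ≤ δ²‖x‖² is best possible: for every k > 0 such that ‖x‖²‖y‖² − (Re⟨x, y⟩)² ≤ k·δ²‖x‖² holds for all x, y in H and δ > 0 with ‖x − y‖ ≤ δ and ‖y‖ > δ, one has k ≥ 1. -/
theorem stmt3 {𝕂 H : Type*} [RCLike 𝕂] [NormedAddCommGroup H] [InnerProductSpace 𝕂 H]
    (hdim : ∃ y z : H, ‖y‖ = 1 ∧ ‖z‖ = 1 ∧ (inner 𝕂 y z : 𝕂) = 0)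
    (k : ℝ) (hk : 0 < k)
    (hineq : ∀ (x y : H) (δ : ℝ), 0 < δ → ‖x - y‖ ≤ δ → δ < ‖y‖ →
      ‖x‖ ^ 2 * ‖y‖ ^ 2 - (RCLike.re (inner 𝕂 x y : 𝕂)) ^ 2 ≤ k * δ ^ 2 * ‖x‖ ^ 2) :
    1 ≤ k := by
  obtain ⟨y, z, hy, hz, hyz⟩ := hdim
  have key : ∀ δ : ℝ, 0 < δ → δ < 1 → 1 ≤ k * (1 + δ ^ 2) := by
    intro δ hδ hδ1
    set x : H := y + (δ : 𝕂) • z with hx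
    have hzy : (inner 𝕂 z y : 𝕂) = 0 := by
      rwa [inner_eq_zero_symm] at hyz
    have hxy : (inner 𝕂 x y : 𝕂) = 1 := by
      rw [hx, inner_add_left, inner_smul_left, hzy, mul_zero, add_zero,
        inner_self_eq_norm_sq_to_K, hy]
      norm_num
    have hnx : ‖x‖ ^ 2 = 1 + δ ^ 2 := by
      rw [hx, @norm_add_sq 𝕂, inner_smul_right, hyz, mul_zero, map_zero, norm_smul, hy, hz]
      simp [RCLike.norm_ofReal, abs_of_pos hδ]
    have hdist : ‖x - y‖ ≤ δ := by
      rw [hx]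
      simp [norm_smul, hz, RCLike.norm_ofReal, abs_of_pos hδ]
    have := hineq x y δ hδ hdist (by rw [hy]; exact hδ1)
    rw [hnx, hxy, hy] at this
    simp only [RCLike.one_re] at this
    have hpos : 0 < 1 + δ ^ 2 := by positivity
    nlinarith [mul_pos hδ hδ, sq_nonneg δ]
  by_contra hk1
  push_neg at hk1
  set δ := Real.sqrt (min (1/2) ((1 - k) / (2 * k))) with hδdef
  have hmin : 0 < min (1/2) ((1 - k) / (2 * k)) := by
    apply lt_min (by norm_num)
    exact div_pos (by linarith) (by linarith)
  have hδpos : 0 < δ := Real.sqrt_pos.mpr hmin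
  have hδsq : δ ^ 2 = min (1/2) ((1 - k) / (2 * k)) := Real.sq_sqrt hmin.le
  have hδ1 : δ < 1 := by
    rw [show (1:ℝ) = Real.sqrt 1 by simp]
    apply Real.sqrt_lt_sqrt hmin.le
    calc min (1/2) ((1 - k) / (2 * k)) ≤ 1/2 := min_le_left _ _
      _ < 1 := by norm_num
  have h1 := key δ hδpos hδ1
  have h2 : δ ^ 2 ≤ (1 - k) / (2 * k) := hδsq ▸ min_le_right _ _
  have h3 : k * δ ^ 2 ≤ (1 - k) / 2 := by
    calc k * δ ^ 2 ≤ k * ((1 - k) / (2 * k)) := mul_le_mul_of_nonneg_left h2 hk.le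
      _ = (1 - k) / 2 := by field_simp
  nlinarith
end

section
/- For x, y in an inner product space over 𝕂 (ℝ or ℂ) and scalars a, b ∈ 𝕂, the condition Re⟨x − a·y, b·y − x⟩ ≥ 0 is equivalent to ‖x − ((a+b)/2)·y‖ ≤ (1/2)·|a − b|·‖y‖. -/
theorem stmt9 {𝕂 H : Type*} [RCLike 𝕂] [NormedAddCommGroup H] [InnerProductSpace 𝕂 H]
    (x y : H) (a b : 𝕂) :
    0 ≤ RCLike.re (inner 𝕂 (x - a • y) (b • y - x) : 𝕂) ↔
      ‖x - ((a + b) / 2) • y‖ ≤ (1 / 2) * ‖a - b‖ * ‖y‖ := by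
  set z : H := x - ((a + b) / 2) • y with hz
  set w : H := ((b - a) / 2) • y with hw
  have gen : ∀ u v : H, RCLike.re (inner 𝕂 (u + v) (v - u) : 𝕂) = ‖v‖ ^ 2 - ‖u‖ ^ 2 := by
    intro u v
    rw [inner_add_left, inner_sub_right, inner_sub_right, map_add, map_sub, map_sub,
      ← inner_self_eq_norm_sq (𝕜 := 𝕂) v, ← inner_self_eq_norm_sq (𝕜 := 𝕂) u,
      inner_re_symm u v]
    ring
  have h1 : x - a • y = z + w := by rw [hz, hw]; module
  have h2 : b • y - x = w - z := by rw [hz, hw]; module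
  have key : RCLike.re (inner 𝕂 (x - a • y) (b • y - x) : 𝕂) = ‖w‖ ^ 2 - ‖z‖ ^ 2 := by
    rw [h1, h2, gen]
  have hwn : ‖w‖ = 1 / 2 * ‖a - b‖ * ‖y‖ := by
    rw [hw, norm_smul, norm_div, norm_sub_rev, RCLike.norm_two]
    ring
  rw [key, sub_nonneg, ← hwn]
  constructor
  · intro h
    nlinarith [norm_nonneg z, norm_nonneg w]
  · intro h
    nlinarith [norm_nonneg z, norm_nonneg w]
end

section
/- If x, y are elements of an inner product space over 𝕂, a, b ∈ 𝕂 satisfy Re⟨x − a·y, b·y − x⟩ ≥ 0 and Re(a·conj b) > 0, then ‖x‖²‖y‖² ≤ (1/4)·|a + b|²·|⟨x, y⟩|² / Re(a·conj b). -/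
theorem stmt11 {𝕂 H : Type*} [RCLike 𝕂] [NormedAddCommGroup H] [InnerProductSpace 𝕂 H]
    (x y : H) (a b : 𝕂)
    (hab : 0 ≤ RCLike.re (inner 𝕂 (x - a • y) (b • y - x) : 𝕂))
    (hre : 0 < RCLike.re (a * (starRingEnd 𝕂) b)) :
    ‖x‖ ^ 2 * ‖y‖ ^ 2 ≤
      (1 / 4) * ‖a + b‖ ^ 2 * ‖(inner 𝕂 x y : 𝕂)‖ ^ 2 / RCLike.re (a * (starRingEnd 𝕂) b) := by
  set z : 𝕂 := inner 𝕂 x y with hz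
  set r : ℝ := RCLike.re (a * (starRingEnd 𝕂) b) with hr
  have expand : (inner 𝕂 (x - a • y) (b • y - x) : 𝕂)
      = b * z + (starRingEnd 𝕂) a * (starRingEnd 𝕂) z
        - ((‖x‖ : 𝕂) ^ 2) - (starRingEnd 𝕂) a * b * ((‖y‖ : 𝕂) ^ 2) := by
    simp [inner_sub_left, inner_sub_right, inner_smul_left, inner_smul_right,
      ← inner_conj_symm y x, inner_self_eq_norm_sq_to_K, ← hz]
    ring
  have h1 : ‖x‖ ^ 2 + r * ‖y‖ ^ 2 ≤ RCLike.re ((a + b) * z) := by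
    rw [expand] at hab
    simp only [map_add, map_sub, RCLike.mul_re, RCLike.conj_re, RCLike.conj_im,
      add_mul, RCLike.ofReal_pow] at hab ⊢
    simp [RCLike.mul_re, hr, pow_two] at hab ⊢
    nlinarith [hab]
  have hz2 : RCLike.re ((a + b) * z) ≤ ‖a + b‖ * ‖z‖ := by
    calc RCLike.re ((a + b) * z) ≤ ‖(a + b) * z‖ := RCLike.re_le_norm _
    _ = ‖a + b‖ * ‖z‖ := norm_mul _ _
  have hM : ‖x‖ ^ 2 + r * ‖y‖ ^ 2 ≤ ‖a + b‖ * ‖z‖ := le_trans h1 hz2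
  have hS : (‖x‖ ^ 2 + r * ‖y‖ ^ 2) ^ 2 ≤ (‖a + b‖ * ‖z‖) ^ 2 :=
    pow_le_pow_left₀ (by positivity) hM 2
  rw [le_div_iff₀ hre]
  nlinarith [sq_nonneg (‖x‖ ^ 2 - r * ‖y‖ ^ 2), hS]
end

section
/- If x, y are elements of an inner product space over 𝕂, a, b ∈ 𝕂 satisfy Re⟨x − a·y, b·y − x⟩ ≥ 0 and Re(a·conj b) > 0, then 0 ≤ ‖x‖²‖y‖² − |⟨x, y⟩|² ≤ (1/4)·|a − b|²·|⟨x, y⟩|² / Re(a·conj b). -/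
theorem stmt14 {𝕂 H : Type*} [RCLike 𝕂] [NormedAddCommGroup H] [InnerProductSpace 𝕂 H]
    (x y : H) (a b : 𝕂)
    (hab : 0 ≤ RCLike.re (inner 𝕂 (x - a • y) (b • y - x) : 𝕂))
    (hre : 0 < RCLike.re (a * (starRingEnd 𝕂) b)) :
    0 ≤ ‖x‖ ^ 2 * ‖y‖ ^ 2 - ‖(inner 𝕂 x y : 𝕂)‖ ^ 2 ∧
      ‖x‖ ^ 2 * ‖y‖ ^ 2 - ‖(inner 𝕂 x y : 𝕂)‖ ^ 2 ≤
        (1 / 4) * ‖a - b‖ ^ 2 * ‖(inner 𝕂 x y : 𝕂)‖ ^ 2 / RCLike.re (a * (starRingEnd 𝕂) b) := by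
  have hcs : ‖(inner 𝕂 x y : 𝕂)‖ ≤ ‖x‖ * ‖y‖ := norm_inner_le_norm x y
  have h0 : 0 ≤ ‖x‖ ^ 2 * ‖y‖ ^ 2 - ‖(inner 𝕂 x y : 𝕂)‖ ^ 2 := by
    nlinarith [norm_nonneg (inner 𝕂 x y : 𝕂), norm_nonneg x, norm_nonneg y]
  refine ⟨h0, ?_⟩
  set s : 𝕂 := inner 𝕂 x y with hs
  have hexp : (inner 𝕂 (x - a • y) (b • y - x) : 𝕂)
      = b * s - inner 𝕂 x x - ((starRingEnd 𝕂) a * b) * inner 𝕂 y y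
        + (starRingEnd 𝕂) a * (starRingEnd 𝕂) s := by
    simp only [inner_sub_left, inner_sub_right, inner_smul_left, inner_smul_right, hs,
      ← inner_conj_symm x y, RCLike.conj_conj]
    ring
  rw [hexp] at hab
  have h1 : ‖x‖ ^ 2 + RCLike.re (a * (starRingEnd 𝕂) b) * ‖y‖ ^ 2
      ≤ RCLike.re ((a + b) * s) := by
    simp only [map_add, map_sub, RCLike.mul_re, RCLike.conj_re, RCLike.conj_im,
      inner_self_eq_norm_sq, inner_self_im] at hab ⊢
    nlinarith [hab]
  have h2 : RCLike.re ((a + b) * s) ≤ ‖a + b‖ * ‖s‖ := by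
    calc RCLike.re ((a + b) * s) ≤ ‖(a + b) * s‖ := RCLike.re_le_norm _
    _ = ‖a + b‖ * ‖s‖ := norm_mul _ _
  have hpm : ‖a + b‖ ^ 2 = ‖a - b‖ ^ 2 + 4 * RCLike.re (a * (starRingEnd 𝕂) b) := by
    simp only [RCLike.norm_sq_eq_def, map_add, map_sub, RCLike.mul_re,
      RCLike.conj_re, RCLike.conj_im]
    ring
  have hr := hre
  have key : 4 * RCLike.re (a * (starRingEnd 𝕂) b) * (‖x‖ ^ 2 * ‖y‖ ^ 2)
      ≤ ‖a + b‖ ^ 2 * ‖s‖ ^ 2 := by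
    have hny : 0 ≤ ‖y‖ := norm_nonneg y
    have hnx : 0 ≤ ‖x‖ := norm_nonneg x
    have hsum : 0 ≤ ‖x‖ ^ 2 + RCLike.re (a * (starRingEnd 𝕂) b) * ‖y‖ ^ 2 := by positivity
    nlinarith [sq_nonneg (‖x‖ ^ 2 - RCLike.re (a * (starRingEnd 𝕂) b) * ‖y‖ ^ 2),
      mul_self_nonneg (‖a + b‖ * ‖s‖), h1.trans h2, hsum]
  rw [le_div_iff₀ hre]
  nlinarith [key, hpm, norm_nonneg s, hre]
end

section
/- The constant 1/4 is best possible in the inequality ‖x‖²‖y‖² ≤ l·(Re((conj a + conj b)·⟨x, y⟩))² / Re(a·conj b): if l > 0 is such that the inequality holds for all nonzero x, y and all a, b with Re(a·conj b) > 0 and Re⟨x − a·y, b·y − x⟩ ≥ 0, then l ≥ 1/4. -/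
theorem stmt15 {H : Type*} [NormedAddCommGroup H] [InnerProductSpace ℝ H] [Nontrivial H]
    (l : ℝ) (hl : 0 < l)
    (hineq : ∀ (x y : H), x ≠ 0 → y ≠ 0 → ∀ a b : ℝ, 0 < a → 0 < b →
      0 ≤ (inner ℝ (x - a • y) (b • y - x) : ℝ) →
      ‖x‖ ^ 2 * ‖y‖ ^ 2 ≤ l * ((a + b) * (inner ℝ x y : ℝ)) ^ 2 / (a * b)) :
    1 / 4 ≤ l := by
  obtain ⟨x, hx⟩ := exists_ne (0 : H)
  have h := hineq x x hx hx 1 1 one_pos one_pos (by simp)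
  rw [real_inner_self_eq_norm_sq] at h
  have hx2 : (0:ℝ) < ‖x‖ ^ 2 := pow_pos (norm_pos_iff.mpr hx) 2
  have hn : (0:ℝ) < ‖x‖ ^ 2 * ‖x‖ ^ 2 := mul_pos hx2 hx2
  nlinarith [h, hn]
end

section
/- If x, y are elements of a real inner product space, a, b ∈ ℝ with ab > 0 and ⟨x − a·y, b·y − x⟩ ≥ 0, then ‖x‖²‖y‖² − ⟨x, y⟩² ≤ ((a−b)²/(4ab))·⟨x, y⟩². -/
theorem stmt18 {H : Type*} [NormedAddCommGroup H] [InnerProductSpace ℝ H]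
    (x y : H) (a b : ℝ) (hab : 0 < a * b)
    (h : 0 ≤ (inner ℝ (x - a • y) (b • y - x) : ℝ)) :
    ‖x‖ ^ 2 * ‖y‖ ^ 2 - (inner ℝ x y : ℝ) ^ 2 ≤
      ((a - b) ^ 2 / (4 * (a * b))) * (inner ℝ x y : ℝ) ^ 2 := by
  set t : ℝ := inner ℝ x y with ht
  have hexp : (inner ℝ (x - a • y) (b • y - x) : ℝ)
      = (a + b) * t - ‖x‖ ^ 2 - a * b * ‖y‖ ^ 2 := by
    simp only [inner_sub_left, inner_sub_right, real_inner_smul_left,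
      real_inner_smul_right, real_inner_self_eq_norm_sq]
    have hc : (inner ℝ y x : ℝ) = t := by rw [real_inner_comm]
    rw [hc]; ring
  rw [hexp] at h
  have hs : Real.sqrt (a * b) ^ 2 = a * b := Real.sq_sqrt hab.le
  have h1 : 2 * Real.sqrt (a * b) * (‖x‖ * ‖y‖) ≤ (a + b) * t := by
    nlinarith [sq_nonneg (‖x‖ - Real.sqrt (a * b) * ‖y‖)]
  have h2 : 4 * (a * b) * (‖x‖ ^ 2 * ‖y‖ ^ 2) ≤ (a + b) ^ 2 * t ^ 2 := by
    have h0 : 0 ≤ 2 * Real.sqrt (a * b) * (‖x‖ * ‖y‖) := by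
      positivity
    nlinarith [mul_self_le_mul_self h0 h1]
  rw [div_mul_eq_mul_div, le_div_iff₀ (by positivity)]
  nlinarith [h2]
end

section
/- If x and y are elements of an inner product space with ‖x − y‖ ≤ δ and ‖y‖ > δ > 0, then |⟨x, y⟩| ≥ ‖x‖·√(‖y‖² − δ²); in particular ⟨x, y⟩ ≠ 0 when x ≠ 0. -/
theorem stmt19 {𝕂 H : Type*} [RCLike 𝕂] [NormedAddCommGroup H] [InnerProductSpace 𝕂 H]
    (x y : H) (δ : ℝ) (hδ : 0 < δ) (hxy : ‖x - y‖ ≤ δ) (hy : δ < ‖y‖) :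
    ‖x‖ * Real.sqrt (‖y‖ ^ 2 - δ ^ 2) ≤ ‖(inner 𝕂 x y : 𝕂)‖ ∧
      (x ≠ 0 → (inner 𝕂 x y : 𝕂) ≠ 0) := by
  set r := Real.sqrt (‖y‖ ^ 2 - δ ^ 2) with hr
  have hsub : (0:ℝ) ≤ ‖y‖ ^ 2 - δ ^ 2 := by nlinarith [norm_nonneg y]
  have hr2 : r ^ 2 = ‖y‖ ^ 2 - δ ^ 2 := Real.sq_sqrt hsub
  have hrpos : 0 < r := Real.sqrt_pos.mpr (by nlinarith)
  have hexp : ‖x - y‖ ^ 2 = ‖x‖ ^ 2 - 2 * RCLike.re (inner 𝕂 x y : 𝕂) + ‖y‖ ^ 2 :=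
    @norm_sub_sq 𝕂 H _ _ _ x y
  have hd2 : ‖x - y‖ ^ 2 ≤ δ ^ 2 := by
    have := norm_nonneg (x - y)
    nlinarith
  have hre : ‖x‖ * r ≤ RCLike.re (inner 𝕂 x y : 𝕂) := by nlinarith [sq_nonneg (‖x‖ - r)]
  have hmain : ‖x‖ * r ≤ ‖(inner 𝕂 x y : 𝕂)‖ :=
    hre.trans (RCLike.re_le_norm _)
  refine ⟨hmain, fun hx => ?_⟩
  have hxpos : 0 < ‖x‖ := norm_pos_iff.mpr hx
  have : 0 < ‖(inner 𝕂 x y : 𝕂)‖ := lt_of_lt_of_le (by positivity) hmain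
  exact norm_pos_iff.mp this
end
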